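/- For α ∈ {1,2,3} with (α, β, γ) a cyclic permutation of (1,2,3), the identity I_{γβ}·θ_{γ+1}(x)·θ_{β+1}(x+2η) − I_{βγ}·θ_{β+1}(x)·θ_{γ+1}(x+2η) = (−1)^α · I_{α0}·θ_{α+1}(x)·θ₁(x+2η) holds for all complex x, where I_{ab} = θ_{a+1}(0)·θ_{b+1}(2η). -/

import Mathlib

open Complex

noncomputable def theta1 (τ z : ℂ) : ℂ :=
  ∑' k : ℤ, Complex.exp (Real.pi * Complex.I * τ * (k + 1/2)^2 +
    2 * Real.pi * Complex.I * (z + 1/2) * (k + 1/2))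

noncomputable def theta2 (τ z : ℂ) : ℂ :=
  ∑' k : ℤ, Complex.exp (Real.pi * Complex.I * τ * (k + 1/2)^2 +
    2 * Real.pi * Complex.I * z * (k + 1/2))

noncomputable def theta3 (τ z : ℂ) : ℂ :=
  ∑' k : ℤ, Complex.exp (Real.pi * Complex.I * τ * k^2 +
    2 * Real.pi * Complex.I * z * k)

noncomputable def theta4 (τ z : ℂ) : ℂ :=
  ∑' k : ℤ, Complex.exp (Real.pi * Complex.I * τ * k^2 +
    2 * Real.pi * Complex.I * (z + 1/2) * k)

/-- `th a τ z = θ_a(z|τ)` for `a = 1,2,3,4`. -/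
noncomputable def th : ℕ → ℂ → ℂ → ℂ
  | 1 => theta1
  | 2 => theta2
  | 3 => theta3
  | _ => theta4

/-!
Watson's trick: splitting the double series of `thetaChar a τ x * thetaChar c τ y` according to
the parity of `m + n` gives a product formula with modulus `2τ`. In particular every product
`θᵢ(x) θᵢ(y)` is a quadratic expression in `A = thetaChar 0 (2τ)` and `B = thetaChar (1/2) (2τ)`
evaluated at `x + y` and `x - y`. For the pairs `(x, 0)` and `(x + 2η, 2η)` these arguments are
`x` and `x + 4η`, so both sides of the identity become the same polynomial in
`A(x), B(x), A(x + 4η), B(x + 4η)`.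
-/

open Real

def Int.parityEquiv : (ℤ × ℤ) ⊕ (ℤ × ℤ) ≃ ℤ × ℤ where
  toFun := Sum.elim (fun p => (p.1 + p.2, p.1 - p.2)) (fun p => (p.1 + p.2 + 1, p.1 - p.2))
  invFun q :=
    if (q.1 + q.2) % 2 = 0 then .inl ((q.1 + q.2) / 2, (q.1 - q.2) / 2)
    else .inr ((q.1 + q.2 - 1) / 2, (q.1 - q.2 - 1) / 2)
  left_inv := by
    rintro (⟨j, k⟩ | ⟨j, k⟩) <;> dsimp only [Sum.elim_inl, Sum.elim_inr] <;> split_ifs <;>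
      first | omega | (simp only [Sum.inl.injEq, Sum.inr.injEq, Prod.mk.injEq]; omega)
  right_inv := by
    rintro ⟨m, n⟩
    dsimp only
    split_ifs <;> simp only [Sum.elim_inl, Sum.elim_inr, Prod.mk.injEq] <;> omega

theorem tsum_mul_tsum_int_eq_parity_split {R : Type*} [NormedRing R] [CompleteSpace R]
    {f g : ℤ → R} (hf : Summable fun n => ‖f n‖) (hg : Summable fun n => ‖g n‖) :
    (∑' m, f m) * (∑' n, g n) =
      (∑' p : ℤ × ℤ, f (p.1 + p.2) * g (p.1 - p.2)) +
        ∑' p : ℤ × ℤ, f (p.1 + p.2 + 1) * g (p.1 - p.2) := by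
  have hfg := (summable_mul_of_summable_norm hf hg).comp_injective Int.parityEquiv.injective
  rw [tsum_mul_tsum_of_summable_norm hf hg, ← Int.parityEquiv.tsum_eq]
  exact Summable.tsum_sum (hfg.comp_injective Sum.inl_injective)
    (hfg.comp_injective Sum.inr_injective)

noncomputable def thetaCharTerm (a τ z : ℂ) (n : ℤ) : ℂ :=
  cexp (π * I * τ * (n + a) ^ 2 + 2 * π * I * z * (n + a))

noncomputable def thetaChar (a τ z : ℂ) : ℂ := ∑' n : ℤ, thetaCharTerm a τ z n

theorem thetaCharTerm_eq_mul_jacobiTheta₂_term (a τ z : ℂ) (n : ℤ) :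
    thetaCharTerm a τ z n =
      jacobiTheta₂_term n (z + a * τ) τ * cexp (π * I * τ * a ^ 2 + 2 * π * I * z * a) := by
  rw [thetaCharTerm, jacobiTheta₂_term, ← Complex.exp_add]
  ring_nf

theorem summable_norm_thetaCharTerm {τ : ℂ} (hτ : 0 < τ.im) (a z : ℂ) :
    Summable fun n => ‖thetaCharTerm a τ z n‖ := by
  simp_rw [thetaCharTerm_eq_mul_jacobiTheta₂_term, norm_mul]
  exact (summable_norm_iff.mpr ((summable_jacobiTheta₂_term_iff _ τ).mpr hτ)).mul_right _

theorem thetaChar_mul_thetaChar {τ : ℂ} (hτ : 0 < τ.im) (a c x y : ℂ) :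
    thetaChar a τ x * thetaChar c τ y =
      thetaChar ((a + c) / 2) (2 * τ) (x + y) * thetaChar ((a - c) / 2) (2 * τ) (x - y) +
        thetaChar ((a + c + 1) / 2) (2 * τ) (x + y) *
          thetaChar ((a - c + 1) / 2) (2 * τ) (x - y) := by
  have hτ₂ : 0 < (2 * τ).im := by simpa using hτ
  simp only [thetaChar]
  rw [tsum_mul_tsum_int_eq_parity_split (summable_norm_thetaCharTerm hτ a x)
      (summable_norm_thetaCharTerm hτ c y),
    tsum_mul_tsum_of_summable_norm (summable_norm_thetaCharTerm hτ₂ _ _)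
      (summable_norm_thetaCharTerm hτ₂ _ _),
    tsum_mul_tsum_of_summable_norm (summable_norm_thetaCharTerm hτ₂ _ _)
      (summable_norm_thetaCharTerm hτ₂ _ _)]
  congr 1 <;> refine tsum_congr fun p => ?_ <;>
    simp only [thetaCharTerm, ← Complex.exp_add] <;> congr 1 <;> push_cast <;> ring

theorem thetaChar_add_one_left (a τ z : ℂ) : thetaChar (a + 1) τ z = thetaChar a τ z := by
  rw [thetaChar, thetaChar, ← (Equiv.addRight (1 : ℤ)).tsum_eq (thetaCharTerm a τ z)]
  refine tsum_congr fun n => ?_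
  simp only [thetaCharTerm, Equiv.coe_addRight]
  push_cast
  ring_nf

theorem thetaChar_add_one (a τ z : ℂ) :
    thetaChar a τ (z + 1) = cexp (2 * π * I * a) * thetaChar a τ z := by
  rw [thetaChar, thetaChar, ← tsum_mul_left]
  refine tsum_congr fun n => ?_
  rw [thetaCharTerm, thetaCharTerm, ← Complex.exp_add,
    show π * I * τ * (n + a) ^ 2 + 2 * π * I * (z + 1) * (n + a) =
      n * (2 * π * I) + (2 * π * I * a + (π * I * τ * (n + a) ^ 2 + 2 * π * I * z * (n + a)))
      by ring,
    Complex.exp_add, Complex.exp_int_mul_two_pi_mul_I, one_mul]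

theorem thetaChar_one (τ z : ℂ) : thetaChar 1 τ z = thetaChar 0 τ z := by
  simpa using thetaChar_add_one_left 0 τ z

theorem thetaChar_zero_add_one (τ z : ℂ) : thetaChar 0 τ (z + 1) = thetaChar 0 τ z := by
  simpa using thetaChar_add_one 0 τ z

theorem thetaChar_half_add_one (τ z : ℂ) :
    thetaChar (1 / 2) τ (z + 1) = -thetaChar (1 / 2) τ z := by
  rw [thetaChar_add_one, show 2 * (π : ℂ) * I * (1 / 2) = π * I by ring, Complex.exp_pi_mul_I,
    neg_one_mul]

theorem theta3_eq_thetaChar (τ z : ℂ) : theta3 τ z = thetaChar 0 τ z := by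
  simp [theta3, thetaChar, thetaCharTerm]

theorem theta2_eq_thetaChar (τ z : ℂ) : theta2 τ z = thetaChar (1 / 2) τ z := rfl

theorem theta4_eq_theta3 (τ z : ℂ) : theta4 τ z = theta3 τ (z + 1 / 2) := rfl

theorem theta1_eq_theta2 (τ z : ℂ) : theta1 τ z = theta2 τ (z + 1 / 2) := rfl

theorem theta3_mul_theta3 {τ : ℂ} (hτ : 0 < τ.im) (x y : ℂ) :
    theta3 τ x * theta3 τ y =
      thetaChar 0 (2 * τ) (x + y) * thetaChar 0 (2 * τ) (x - y) +
        thetaChar (1 / 2) (2 * τ) (x + y) * thetaChar (1 / 2) (2 * τ) (x - y) := by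
  rw [theta3_eq_thetaChar, theta3_eq_thetaChar, thetaChar_mul_thetaChar hτ]
  norm_num

theorem theta2_mul_theta2 {τ : ℂ} (hτ : 0 < τ.im) (x y : ℂ) :
    theta2 τ x * theta2 τ y =
      thetaChar (1 / 2) (2 * τ) (x + y) * thetaChar 0 (2 * τ) (x - y) +
        thetaChar 0 (2 * τ) (x + y) * thetaChar (1 / 2) (2 * τ) (x - y) := by
  rw [theta2_eq_thetaChar, theta2_eq_thetaChar, thetaChar_mul_thetaChar hτ]
  norm_num [thetaChar_one]

theorem theta4_mul_theta4 {τ : ℂ} (hτ : 0 < τ.im) (x y : ℂ) :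
    theta4 τ x * theta4 τ y =
      thetaChar 0 (2 * τ) (x + y) * thetaChar 0 (2 * τ) (x - y) -
        thetaChar (1 / 2) (2 * τ) (x + y) * thetaChar (1 / 2) (2 * τ) (x - y) := by
  rw [theta4_eq_theta3, theta4_eq_theta3, theta3_mul_theta3 hτ, add_add_add_comm,
    add_sub_add_right_eq_sub, add_halves, thetaChar_zero_add_one, thetaChar_half_add_one]
  ring

theorem theta1_mul_theta1 {τ : ℂ} (hτ : 0 < τ.im) (x y : ℂ) :
    theta1 τ x * theta1 τ y =
      thetaChar 0 (2 * τ) (x + y) * thetaChar (1 / 2) (2 * τ) (x - y) -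
        thetaChar (1 / 2) (2 * τ) (x + y) * thetaChar 0 (2 * τ) (x - y) := by
  rw [theta1_eq_theta2, theta1_eq_theta2, theta2_mul_theta2 hτ, add_add_add_comm,
    add_sub_add_right_eq_sub, add_halves, thetaChar_zero_add_one, thetaChar_half_add_one]
  ring

theorem th_mul_th_cyclic {τ : ℂ} (hτ : 0 < τ.im) {α β γ : ℕ}
    (hcyc : (α, β, γ) = (1, 2, 3) ∨ (α, β, γ) = (2, 3, 1) ∨ (α, β, γ) = (3, 1, 2)) (x y : ℂ) :
    (th (γ + 1) τ x * th (γ + 1) τ 0) * (th (β + 1) τ (x + y) * th (β + 1) τ y) -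
        (th (β + 1) τ x * th (β + 1) τ 0) * (th (γ + 1) τ (x + y) * th (γ + 1) τ y) =
      (-1) ^ α * (th (α + 1) τ x * th (α + 1) τ 0) * (theta1 τ (x + y) * theta1 τ y) := by
  simp only [Prod.mk.injEq] at hcyc
  rcases hcyc with ⟨rfl, rfl, rfl⟩ | ⟨rfl, rfl, rfl⟩ | ⟨rfl, rfl, rfl⟩ <;>
    simp only [Nat.reduceAdd, th] <;>
    simp only [theta1_mul_theta1 hτ, theta2_mul_theta2 hτ, theta3_mul_theta3 hτ,
      theta4_mul_theta4 hτ, add_zero, sub_zero, add_sub_cancel_right] <;>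
    ring

theorem I_theta_identity (τ : ℂ) (hτ : 0 < τ.im) (η : ℂ) (α β γ : ℕ)
    (hcyc : (α, β, γ) = (1, 2, 3) ∨ (α, β, γ) = (2, 3, 1) ∨ (α, β, γ) = (3, 1, 2))
    (x : ℂ) (I : ℕ → ℕ → ℂ) (hI : ∀ a b, I a b = th (a+1) τ 0 * th (b+1) τ (2*η)) :
    I γ β * th (γ+1) τ x * th (β+1) τ (x + 2*η)
      - I β γ * th (β+1) τ x * th (γ+1) τ (x + 2*η) =
    (-1 : ℂ)^α * I α 0 * th (α+1) τ x * theta1 τ (x + 2*η) := by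
  simp only [hI, zero_add, th.eq_1]
  linear_combination th_mul_th_cyclic hτ hcyc x (2 * η)
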